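/- arXiv:1910.14289 — 4 statements merged into one kernel-verified Lean document; each statement's English description precedes it below -/
import Mathlib

section
/- For λ > 0, λ·∫₀^∞ ∫_{π/3}^{2π/3} e^{-(λ/√3)·r²·sin²φ} · r² dφ dr = (1/√λ) · (1/2) · 3^{-1/4} · √π · (1 + (3/4)·ln 3). -/
/-!
Integrate in `r` first: the Gaussian moment `∫₀^∞ e^{-b r²} r² dr = (√π / 4) b^{-3/2}` with
`b = (λ/√3) sin² φ` reduces the inner integral to `(√π / 4) (λ/√3)^{-3/2} csc³ φ`. Swapping the
integrals is legitimate because `sin φ` is bounded away from `0` on `[π/3, 2π/3]`, so the integrand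
is dominated by a Gaussian in `r` alone. Finally `csc³` has the antiderivative
`-cos φ / (2 sin² φ) + (log (1 - cos φ) - log (1 + cos φ)) / 4`, whence
`∫_{π/3}^{2π/3} csc³ φ dφ = 2/3 + (log 3) / 2`.
-/

open Real MeasureTheory Set

lemma integrableOn_exp_neg_mul_sq_mul_sq {b : ℝ} (hb : 0 < b) :
    IntegrableOn (fun r : ℝ => exp (-b * r ^ 2) * r ^ 2) (Ioi 0) := by
  refine (integrableOn_rpow_mul_exp_neg_mul_sq hb (s := 2) (by norm_num)).congr_fun
    (fun r _ => ?_) measurableSet_Ioi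
  simp only [rpow_two, mul_comm]

lemma integral_exp_neg_mul_sq_mul_sq {b : ℝ} (hb : 0 < b) :
    ∫ r in Ioi (0 : ℝ), exp (-b * r ^ 2) * r ^ 2 = √π / 4 * b ^ (-(3 / 2) : ℝ) := by
  have h := integral_rpow_mul_exp_neg_mul_rpow two_pos (by norm_num : (-1 : ℝ) < 2) hb
  simp only [rpow_two] at h
  rw [show (2 + 1) / 2 = (1 / 2 : ℝ) + 1 by norm_num, Gamma_add_one (by norm_num),
    Gamma_one_half_eq, show -(2 + 1) / 2 = -(3 / 2 : ℝ) by norm_num] at h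
  simp_rw [mul_comm (exp _)]
  rw [h]
  ring

noncomputable def cscCubeAntideriv (φ : ℝ) : ℝ :=
  -cos φ / (2 * sin φ ^ 2) + (log (1 - cos φ) - log (1 + cos φ)) / 4

lemma hasDerivAt_cscCubeAntideriv {φ : ℝ} (h0 : 0 < φ) (hπ : φ < π) :
    HasDerivAt cscCubeAntideriv (sin φ ^ 3)⁻¹ φ := by
  have hsin : 0 < sin φ := sin_pos_of_pos_of_lt_pi h0 hπ
  have hpyth := sin_sq_add_cos_sq φ
  have hcos_lt : cos φ < 1 := by nlinarith
  have hcos_gt : -1 < cos φ := by nlinarith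
  have hfrac : HasDerivAt (fun φ => -cos φ / (2 * sin φ ^ 2))
      ((sin φ * (2 * sin φ ^ 2) - -cos φ * (2 * (2 * sin φ * cos φ))) / (2 * sin φ ^ 2) ^ 2) φ :=
    (hasDerivAt_cos φ).neg.congr_deriv (by ring) |>.div
      (((hasDerivAt_sin φ).pow 2).const_mul 2 |>.congr_deriv (by ring)) (by positivity)
  have hlog_sub : HasDerivAt (fun φ => log (1 - cos φ)) (sin φ / (1 - cos φ)) φ :=
    ((hasDerivAt_cos φ).const_sub 1).congr_deriv (by ring) |>.log (by linarith)
  have hlog_add : HasDerivAt (fun φ => log (1 + cos φ)) (-sin φ / (1 + cos φ)) φ :=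
    ((hasDerivAt_cos φ).const_add 1).log (by linarith)
  refine (hfrac.add ((hlog_sub.sub hlog_add).div_const 4)).congr_deriv ?_
  have : 1 - cos φ ≠ 0 := by linarith
  have : 1 + cos φ ≠ 0 := by linarith
  field_simp
  linear_combination (4 * sin φ ^ 2 + 8 - 8 * cos φ ^ 2) * hpyth

lemma integral_inv_sin_pow_three {a b : ℝ} (ha₀ : 0 < a) (haπ : a < π) (hb₀ : 0 < b)
    (hbπ : b < π) :
    ∫ φ in a..b, (sin φ ^ 3)⁻¹ = cscCubeAntideriv b - cscCubeAntideriv a := by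
  have hsub : uIcc a b ⊆ Ioo 0 π := by
    rw [uIcc]
    exact Icc_subset_Ioo (lt_min ha₀ hb₀) (max_lt haπ hbπ)
  refine intervalIntegral.integral_eq_sub_of_hasDerivAt
    (fun φ hφ => hasDerivAt_cscCubeAntideriv (hsub hφ).1 (hsub hφ).2) ?_
  refine ContinuousOn.intervalIntegrable (ContinuousOn.inv₀ (by fun_prop) fun φ hφ => ?_)
  exact (pow_pos (sin_pos_of_pos_of_lt_pi (hsub hφ).1 (hsub hφ).2) 3).ne'

lemma integral_inv_sin_pow_three_pi_div_three :
    ∫ φ in (π / 3)..(2 * π / 3), (sin φ ^ 3)⁻¹ = 2 / 3 + log 3 / 2 := by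
  have hπ := pi_pos
  rw [integral_inv_sin_pow_three (by positivity) (by linarith) (by positivity) (by linarith)]
  have hcos : cos (2 * π / 3) = -(1 / 2) := by
    rw [show 2 * π / 3 = π - π / 3 by ring, cos_pi_sub, cos_pi_div_three]
  have hsin : sin (2 * π / 3) = sin (π / 3) := by
    rw [show 2 * π / 3 = π - π / 3 by ring, sin_pi_sub]
  have hsin_sq : sin (π / 3) ^ 2 = 3 / 4 := by
    rw [sin_pi_div_three, div_pow, sq_sqrt (by norm_num)]
    norm_num
  simp only [cscCubeAntideriv, hcos, hsin, hsin_sq, cos_pi_div_three]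
  have hlog : log (3 / 2) = log 3 + log (1 / 2) := by
    rw [← log_mul (by norm_num) (by norm_num)]
    norm_num
  norm_num [hlog]
  ring

lemma integrable_exp_neg_mul_sq_mul_sin_sq {c a b : ℝ} (hc : 0 < c) (ha : 0 < a) (hab : a ≤ b)
    (hb : b < π) :
    Integrable (Function.uncurry fun r φ => exp (-c * r ^ 2 * sin φ ^ 2) * r ^ 2)
      ((volume.restrict (Ioi 0)).prod (volume.restrict (Ioc a b))) := by
  set m := min (sin a) (sin b)
  have hm : 0 < m := lt_min (sin_pos_of_pos_of_lt_pi ha (by linarith))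
    (sin_pos_of_pos_of_lt_pi (by linarith) hb)
  -- `sin` is concave on `[0, π]`, so on `[a, b]` it is bounded below by its value at an endpoint.
  have hm_le {φ : ℝ} (hφ : φ ∈ Ioc a b) : m ≤ sin φ :=
    strictConcaveOn_sin_Icc.concaveOn.min_le_of_mem_Icc ⟨ha.le, by linarith⟩
      ⟨by linarith, hb.le⟩ (Ioc_subset_Icc_self hφ)
  have hdom := (integrableOn_exp_neg_mul_sq_mul_sq (mul_pos hc (pow_pos hm 2))).mul_prod
    (integrableOn_const (C := (1 : ℝ)) (measure_Ioc_lt_top (μ := volume) (a := a) (b := b)).ne)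
  refine hdom.mono' (by fun_prop) ?_
  rw [Measure.prod_restrict, ae_restrict_iff' (measurableSet_Ioi.prod measurableSet_Ioc)]
  filter_upwards with ⟨r, φ⟩ ⟨_, hφ⟩
  simp only [Function.uncurry, norm_eq_abs, mul_one]
  rw [abs_of_nonneg (by positivity)]
  have hsin_sq : m ^ 2 ≤ sin φ ^ 2 := pow_le_pow_left₀ hm.le (hm_le hφ) 2
  refine mul_le_mul_of_nonneg_right (exp_le_exp.mpr ?_) (sq_nonneg r)
  nlinarith [mul_le_mul_of_nonneg_left hsin_sq (mul_nonneg hc.le (sq_nonneg r))]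

lemma integral_Ioi_integral_exp_neg_mul_sq_mul_sin_sq {c a b : ℝ} (hc : 0 < c) (ha : 0 < a)
    (hab : a ≤ b) (hb : b < π) :
    ∫ r in Ioi (0 : ℝ), ∫ φ in a..b, exp (-c * r ^ 2 * sin φ ^ 2) * r ^ 2
      = √π / 4 * c ^ (-(3 / 2) : ℝ) * ∫ φ in a..b, (sin φ ^ 3)⁻¹ := by
  simp_rw [intervalIntegral.integral_of_le hab]
  rw [integral_integral_swap (integrable_exp_neg_mul_sq_mul_sin_sq hc ha hab hb),
    ← integral_const_mul]
  refine setIntegral_congr_fun measurableSet_Ioc fun φ hφ => ?_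
  have hsin : 0 < sin φ := sin_pos_of_pos_of_lt_pi (by linarith [hφ.1]) (by linarith [hφ.2])
  have hsin_rpow : (sin φ ^ 2) ^ (-(3 / 2) : ℝ) = (sin φ ^ 3)⁻¹ := by
    rw [← rpow_natCast, ← rpow_mul hsin.le,
      show ((2 : ℕ) : ℝ) * -(3 / 2) = -((3 : ℕ) : ℝ) by norm_num, rpow_neg hsin.le, rpow_natCast]
  simp_rw [show ∀ r : ℝ, -c * r ^ 2 * sin φ ^ 2 = -(c * sin φ ^ 2) * r ^ 2 from fun r => by ring]
  rw [integral_exp_neg_mul_sq_mul_sq (by positivity), mul_rpow hc.le (by positivity), hsin_rpow]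
  ring

theorem stmt_4 (l : ℝ) (hl : 0 < l) :
    l * ∫ r in Set.Ioi (0:ℝ), ∫ φ in (π/3)..(2*π/3),
        Real.exp (-(l / Real.sqrt 3) * r^2 * Real.sin φ ^ 2) * r^2
      = 1 / Real.sqrt l * (1/2) * (3:ℝ) ^ (-(1/4) : ℝ) * Real.sqrt π
          * (1 + 3/4 * Real.log 3) := by
  have hπ := pi_pos
  rw [integral_Ioi_integral_exp_neg_mul_sq_mul_sin_sq (by positivity) (by positivity)
    (by linarith) (by linarith), integral_inv_sin_pow_three_pi_div_three]
  have hscale : l * (l / √3) ^ (-(3 / 2) : ℝ) = 3 * 3 ^ (-(1 / 4) : ℝ) / √l := by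
    rw [div_rpow hl.le (sqrt_nonneg 3), sqrt_eq_rpow, sqrt_eq_rpow,
      ← rpow_mul (by norm_num : (0 : ℝ) ≤ 3), mul_div_assoc', ← rpow_one_add' hl.le (by norm_num),
      div_eq_mul_inv, ← rpow_neg (by positivity), show (1 : ℝ) + -(3 / 2) = -(1 / 2) by norm_num,
      show -(1 / 2 * -(3 / 2) : ℝ) = 1 + -(1 / 4) by norm_num, rpow_neg hl.le,
      rpow_add three_pos, rpow_one]
    ring
  calc _ = l * (l / √3) ^ (-(3 / 2) : ℝ) * (√π / 4 * (2 / 3 + log 3 / 2)) := by ring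
    _ = _ := by rw [hscale]; ring
end

section
/- For λ > 0, λ·∫₀^∞ ∫_{π/3}^{2π/3} e^{-(λ/√3)·r²·sin²φ} · r³ dφ dr = 10√3/(9λ). -/
/-!
Substituting `c = (λ/√3) sin²φ` in `∫₀^∞ e^{-c r²} r³ dr = 1/(2c²)` and swapping the two
integrals (legitimate because `sin φ` is bounded away from `0` on `[π/3, 2π/3]`, so a single
`e^{-m r²} r³` dominates) leaves `(3/(2λ)) ∫_{π/3}^{2π/3} sin⁻⁴φ dφ`. An antiderivative of `sin⁻⁴` is
`-cot - cot³/3`, and `cot (π/3) = -cot (2π/3) = 1/√3` gives the value `20√3/27`.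
-/

open Real MeasureTheory Set

theorem integral_exp_neg_mul_sq_mul_pow_three {c : ℝ} (hc : 0 < c) :
    ∫ r in Ioi (0 : ℝ), exp (-c * r ^ 2) * r ^ 3 = (2 * c ^ 2)⁻¹ := by
  have hGamma := integral_rpow_mul_exp_neg_mul_rpow (p := 2) (q := 3) two_pos (by norm_num) hc
  have hexp : (-(3 + 1) / 2 : ℝ) = ((-2 : ℤ) : ℝ) := by norm_num
  have hval : Gamma ((3 + 1) / 2) = 1 := by norm_num
  rw [hexp, rpow_intCast, hval] at hGamma
  calc ∫ r in Ioi (0 : ℝ), exp (-c * r ^ 2) * r ^ 3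
      = ∫ r in Ioi (0 : ℝ), r ^ (3 : ℝ) * exp (-c * r ^ (2 : ℝ)) := by
        refine setIntegral_congr_fun measurableSet_Ioi fun r _ => ?_
        norm_num [mul_comm]
    _ = (2 * c ^ 2)⁻¹ := by
        rw [hGamma, zpow_neg, zpow_ofNat]
        ring

theorem integrable_exp_neg_mul_sq_mul_pow_three_prod {g : ℝ → ℝ} {α β : ℝ}
    (hg : Continuous g) (hpos : ∀ φ ∈ Icc α β, 0 < g φ) :
    Integrable (fun p : ℝ × ℝ => exp (-g p.2 * p.1 ^ 2) * p.1 ^ 3)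
      ((volume.restrict (Ioi 0)).prod (volume.restrict (Ioc α β))) := by
  obtain ⟨m, hm, hgm⟩ := isCompact_Icc.exists_forall_le' hg.continuousOn hpos
  have hbound : Integrable (fun p : ℝ × ℝ => exp (-m * p.1 ^ 2) * p.1 ^ 3)
      ((volume.restrict (Ioi 0)).prod (volume.restrict (Ioc α β))) := by
    refine Integrable.comp_fst (f := fun r : ℝ => exp (-m * r ^ 2) * r ^ 3) ?_ _
    refine (integrableOn_rpow_mul_exp_neg_mul_sq hm (s := 3) (by norm_num)).congr_fun
      (fun r _ => ?_) measurableSet_Ioi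
    norm_cast
    ring
  refine hbound.mono' (by fun_prop) ?_
  have hmem : ∀ᵐ p ∂(volume.restrict (Ioi 0)).prod (volume.restrict (Ioc α β)),
      p ∈ Ioi (0 : ℝ) ×ˢ Ioc α β := by
    rw [Measure.prod_restrict]
    exact ae_restrict_mem (measurableSet_Ioi.prod measurableSet_Ioc)
  filter_upwards [hmem] with ⟨r, φ⟩ ⟨hr, hφ⟩
  have hr : 0 < r := hr
  rw [norm_of_nonneg (by positivity)]
  gcongr
  exact hgm φ (Ioc_subset_Icc_self hφ)

theorem integral_Ioi_intervalIntegral_exp_neg_mul_sq_mul_pow_three {g : ℝ → ℝ} {α β : ℝ}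
    (hαβ : α ≤ β) (hg : Continuous g) (hpos : ∀ φ ∈ Icc α β, 0 < g φ) :
    ∫ r in Ioi (0 : ℝ), ∫ φ in α..β, exp (-g φ * r ^ 2) * r ^ 3
      = ∫ φ in α..β, (2 * g φ ^ 2)⁻¹ := by
  simp only [intervalIntegral.integral_of_le hαβ]
  rw [integral_integral_swap (integrable_exp_neg_mul_sq_mul_pow_three_prod hg hpos)]
  refine setIntegral_congr_fun measurableSet_Ioc fun φ hφ => ?_
  exact integral_exp_neg_mul_sq_mul_pow_three (hpos φ (Ioc_subset_Icc_self hφ))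

theorem hasDerivAt_neg_cot_sub_cot_pow_three_div_three {φ : ℝ} (hφ : sin φ ≠ 0) :
    HasDerivAt (fun x => -cot x - cot x ^ 3 / 3) (sin φ ^ 4)⁻¹ φ := by
  simp only [cot_eq_cos_div_sin]
  have hcot : HasDerivAt (fun x => cos x / sin x)
      ((-sin φ * sin φ - cos φ * cos φ) / sin φ ^ 2) φ :=
    (hasDerivAt_cos φ).div (hasDerivAt_sin φ) hφ
  refine (hcot.neg.sub ((hcot.pow 3).div_const 3)).congr_deriv ?_
  simp only [Nat.cast_ofNat, Nat.add_one_sub_one]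
  field_simp
  linear_combination (sin φ ^ 2 + cos φ ^ 2 + 1) * sin_sq_add_cos_sq φ

theorem integral_inv_sin_pow_four {α β : ℝ} (hα : 0 < α) (hαβ : α ≤ β) (hβ : β < π) :
    ∫ φ in α..β, (sin φ ^ 4)⁻¹ = (-cot β - cot β ^ 3 / 3) - (-cot α - cot α ^ 3 / 3) := by
  have hsin : ∀ φ ∈ uIcc α β, sin φ ≠ 0 := by
    intro φ hφ
    rw [uIcc_of_le hαβ] at hφ
    exact (sin_pos_of_pos_of_lt_pi (hα.trans_le hφ.1) (hφ.2.trans_lt hβ)).ne'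
  refine intervalIntegral.integral_eq_sub_of_hasDerivAt
    (fun φ hφ => hasDerivAt_neg_cot_sub_cot_pow_three_div_three (hsin φ hφ)) ?_
  exact (continuousOn_sin.pow 4).inv₀ (fun φ hφ => pow_ne_zero 4 (hsin φ hφ))
    |>.intervalIntegrable

theorem integral_inv_sin_pow_four_pi_div_three :
    ∫ φ in (π / 3)..(2 * π / 3), (sin φ ^ 4)⁻¹ = 20 * √3 / 27 := by
  have hcot₁ : cot (π / 3) = 1 / √3 := by
    rw [cot_eq_cos_div_sin, cos_pi_div_three, sin_pi_div_three]
    field_simp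
  have hcot₂ : cot (2 * π / 3) = -(1 / √3) := by
    rw [show 2 * π / 3 = π - π / 3 by ring, cot_eq_cos_div_sin, cos_pi_sub, sin_pi_sub,
      neg_div, ← cot_eq_cos_div_sin, hcot₁]
  rw [integral_inv_sin_pow_four (by positivity) (by linarith [pi_pos]) (by linarith [pi_pos]),
    hcot₁, hcot₂]
  field_simp
  linear_combination (-60 * √3 ^ 2 - 18) * sq_sqrt (show (0:ℝ) ≤ 3 by norm_num)

theorem stmt_6 (l : ℝ) (hl : 0 < l) :
    l * ∫ r in Set.Ioi (0:ℝ), ∫ φ in (π/3)..(2*π/3),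
        Real.exp (-(l / Real.sqrt 3) * r^2 * Real.sin φ ^ 2) * r^3
      = 10 * Real.sqrt 3 / (9 * l) := by
  have hsin : ∀ φ ∈ Icc (π / 3) (2 * π / 3), 0 < sin φ := fun φ hφ =>
    sin_pos_of_pos_of_lt_pi (by linarith [pi_pos, hφ.1]) (by linarith [pi_pos, hφ.2])
  have hswap := integral_Ioi_intervalIntegral_exp_neg_mul_sq_mul_pow_three
    (α := π / 3) (β := 2 * π / 3) (g := fun φ => l / √3 * sin φ ^ 2)
    (by linarith [pi_pos]) (by fun_prop)
    (fun φ hφ => by have := hsin φ hφ; positivity)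
  have hsqrt : √3 ^ 2 = 3 := sq_sqrt (by norm_num)
  have hrearrange : ∀ r φ : ℝ, -(l / √3) * r ^ 2 * sin φ ^ 2 = -(l / √3 * sin φ ^ 2) * r ^ 2 :=
    fun _ _ => by ring
  have hinner : ∀ φ, (2 * (l / √3 * sin φ ^ 2) ^ 2)⁻¹ = 3 / (2 * l ^ 2) * (sin φ ^ 4)⁻¹ :=
    fun φ => by field_simp; rw [hsqrt]
  simp_rw [hrearrange, hswap, hinner, intervalIntegral.integral_const_mul,
    integral_inv_sin_pow_four_pi_div_three]
  field_simp
  norm_num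
end

section
/- For λ > 0, λ·∫₀^∞ ∫_{π/3}^{2π/3} e^{-(λ/√3)·r²·sin²φ} · r⁴ dφ dr = ((27·ln 3 + 68)·√(π√3))/(64·λ^{3/2}). -/
/-!
Integrate in `r` first (Fubini): for fixed `φ` the inner integral is the Gaussian moment
`∫₀^∞ e^{-b r²} r⁴ dr = Γ(5/2) / (2 b^{5/2}) = 3√π / (8 b^{5/2})` with `b = (λ/√3) sin² φ`,
so what remains is `(3√π/8) (λ/√3)^{-5/2} ∫_{π/3}^{2π/3} csc⁵ φ dφ`. The cosecant integral is
evaluated with the classical primitive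
`-cos φ / (4 sin⁴ φ) - 3 cos φ / (8 sin² φ) + (3/16) log ((1 - cos φ) / (1 + cos φ))`
and equals `17/18 + (3/8) log 3`.
-/

open Real MeasureTheory Set Function

theorem Real.Gamma_five_halves : Gamma (5 / 2) = 3 / 4 * √π := by
  rw [show (5 / 2 : ℝ) = 1 / 2 + 1 + 1 by norm_num, Gamma_add_one (by norm_num),
    Gamma_add_one (by norm_num), Gamma_one_half_eq]
  ring

theorem integral_exp_neg_mul_sq_mul_pow_four {b : ℝ} (hb : 0 < b) :
    ∫ r in Ioi (0 : ℝ), exp (-b * r ^ 2) * r ^ 4 = 3 * √π / 8 * b ^ (-(5 / 2 : ℝ)) := by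
  calc ∫ r in Ioi (0 : ℝ), exp (-b * r ^ 2) * r ^ 4
      = ∫ r in Ioi (0 : ℝ), r ^ (4 : ℝ) * exp (-b * r ^ (2 : ℝ)) := by
        simp only [rpow_ofNat, mul_comm]
    _ = 3 * √π / 8 * b ^ (-(5 / 2 : ℝ)) := by
        rw [integral_rpow_mul_exp_neg_mul_rpow two_pos (by norm_num) hb]
        norm_num [Gamma_five_halves]
        ring

theorem integrableOn_exp_neg_mul_sq_mul_pow_four {b : ℝ} (hb : 0 < b) :
    IntegrableOn (fun r : ℝ ↦ exp (-b * r ^ 2) * r ^ 4) (Ioi 0) := by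
  refine (integrableOn_rpow_mul_exp_neg_mul_sq hb (s := 4) (by norm_num)).congr_fun
    (fun r _ ↦ ?_) measurableSet_Ioi
  simp only [rpow_ofNat, mul_comm]

theorem integral_Ioi_intervalIntegral_exp_neg_mul_sq_mul_pow_four {b : ℝ → ℝ} {α β : ℝ}
    (hb_cont : Continuous b) (hb : ∀ φ ∈ uIcc α β, 0 < b φ) :
    ∫ r in Ioi (0 : ℝ), ∫ φ in α..β, exp (-b φ * r ^ 2) * r ^ 4
      = 3 * √π / 8 * ∫ φ in α..β, b φ ^ (-(5 / 2 : ℝ)) := by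
  have hint : Integrable (uncurry fun φ r ↦ exp (-b φ * r ^ 2) * r ^ 4)
      ((volume.restrict (uIoc α β)).prod (volume.restrict (Ioi 0))) := by
    rw [integrable_prod_iff (by fun_prop)]
    refine ⟨ae_restrict_of_forall_mem measurableSet_uIoc fun φ hφ ↦
      integrableOn_exp_neg_mul_sq_mul_pow_four (hb φ (uIoc_subset_uIcc hφ)), ?_⟩
    have hcont : ContinuousOn (fun φ ↦ 3 * √π / 8 * b φ ^ (-(5 / 2 : ℝ))) (uIcc α β) :=
      continuousOn_const.mul
        (hb_cont.continuousOn.rpow_const fun φ hφ ↦ Or.inl (hb φ hφ).ne')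
    refine (hcont.integrableOn_uIcc.mono_set uIoc_subset_uIcc).congr_fun (fun φ hφ ↦ ?_)
      measurableSet_uIoc
    simp only [uncurry, norm_mul, norm_pow, norm_eq_abs, abs_exp,
      Even.pow_abs (by decide : Even 4)]
    exact (integral_exp_neg_mul_sq_mul_pow_four (hb φ (uIoc_subset_uIcc hφ))).symm
  rw [← intervalIntegral_integral_swap hint, ← intervalIntegral.integral_const_mul]
  exact intervalIntegral.integral_congr fun φ hφ ↦ integral_exp_neg_mul_sq_mul_pow_four (hb φ hφ)

noncomputable def invSinPowFivePrimitive (φ : ℝ) : ℝ :=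
  -cos φ / (4 * sin φ ^ 4) - 3 * cos φ / (8 * sin φ ^ 2)
    + 3 / 16 * (log (1 - cos φ) - log (1 + cos φ))

theorem hasDerivAt_log_one_sub_cos_sub_log_one_add_cos {φ : ℝ} (hφ : sin φ ≠ 0) :
    HasDerivAt (fun x ↦ log (1 - cos x) - log (1 + cos x)) (2 / sin φ) φ := by
  have hpyth : (1 - cos φ) * (1 + cos φ) = sin φ ^ 2 := by
    linear_combination -sin_sq_add_cos_sq φ
  have hsub : 1 - cos φ ≠ 0 := left_ne_zero_of_mul (hpyth ▸ pow_ne_zero 2 hφ)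
  have hadd : 1 + cos φ ≠ 0 := right_ne_zero_of_mul (hpyth ▸ pow_ne_zero 2 hφ)
  refine ((((hasDerivAt_cos φ).const_sub 1).log hsub).fun_sub
    (((hasDerivAt_cos φ).const_add 1).log hadd)).congr_deriv ?_
  field_simp
  linear_combination -2 * hpyth

theorem hasDerivAt_invSinPowFivePrimitive {φ : ℝ} (hφ : sin φ ≠ 0) :
    HasDerivAt invSinPowFivePrimitive (sin φ ^ 5)⁻¹ φ := by
  have hcos := hasDerivAt_cos φ
  have hsin := hasDerivAt_sin φ
  refine (((hcos.fun_neg.fun_div (hsin.fun_pow 4 |>.const_mul 4) (by positivity)).fun_sub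
    ((hcos.const_mul 3).fun_div (hsin.fun_pow 2 |>.const_mul 8) (by positivity))).fun_add
    ((hasDerivAt_log_one_sub_cos_sub_log_one_add_cos hφ).const_mul (3 / 16))).congr_deriv ?_
  field_simp
  rw [cos_sq']
  ring

theorem sin_pos_of_mem_uIcc_pi_div_three {φ : ℝ} (hφ : φ ∈ uIcc (π / 3) (2 * π / 3)) :
    0 < sin φ := by
  rw [uIcc_of_le (by linarith [pi_pos])] at hφ
  exact sin_pos_of_pos_of_lt_pi (by linarith [pi_pos, hφ.1]) (by linarith [pi_pos, hφ.2])

theorem integral_inv_sin_pow_five_pi_div_three_two_pi_div_three :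
    ∫ φ in (π / 3)..(2 * π / 3), (sin φ ^ 5)⁻¹ = 17 / 18 + 3 / 8 * log 3 := by
  have hsin : ∀ φ ∈ uIcc (π / 3) (2 * π / 3), sin φ ≠ 0 :=
    fun φ hφ ↦ (sin_pos_of_mem_uIcc_pi_div_three hφ).ne'
  rw [intervalIntegral.integral_eq_sub_of_hasDerivAt
    (fun φ hφ ↦ hasDerivAt_invSinPowFivePrimitive (hsin φ hφ))
    ((continuous_sin.pow 5).continuousOn.inv₀ fun φ hφ ↦
      pow_ne_zero 5 (hsin φ hφ)).intervalIntegrable]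
  have hsin' : sin (2 * π / 3) = √3 / 2 := by
    rw [show 2 * π / 3 = π - π / 3 by ring, sin_pi_sub, sin_pi_div_three]
  have hcos' : cos (2 * π / 3) = -(1 / 2) := by
    rw [show 2 * π / 3 = π - π / 3 by ring, cos_pi_sub, cos_pi_div_three]
  have hsqrt : √3 ^ 2 = 3 := sq_sqrt (by norm_num)
  have hlog : log (3 / 2) - log (1 / 2) = log 3 := by
    rw [← log_div (by norm_num) (by norm_num)]
    norm_num
  simp only [invSinPowFivePrimitive, hsin', hcos', sin_pi_div_three, cos_pi_div_three]
  norm_num [div_pow, hsqrt, show √3 ^ 4 = (√3 ^ 2) ^ 2 by ring]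
  linear_combination 3 / 8 * hlog

theorem stmt_8 (l : ℝ) (hl : 0 < l) :
    l * ∫ r in Set.Ioi (0:ℝ), ∫ φ in (π/3)..(2*π/3),
        Real.exp (-(l / Real.sqrt 3) * r^2 * Real.sin φ ^ 2) * r^4
      = (27 * Real.log 3 + 68) * Real.sqrt (π * Real.sqrt 3)
          / (64 * l ^ ((3:ℝ)/2)) := by
  have hrpow : ∀ φ ∈ uIcc (π / 3) (2 * π / 3),
      (l / √3 * sin φ ^ 2) ^ (-(5 / 2 : ℝ)) = (l / √3) ^ (-(5 / 2 : ℝ)) * (sin φ ^ 5)⁻¹ := by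
    intro φ hφ
    have hsin := (sin_pos_of_mem_uIcc_pi_div_three hφ).le
    rw [mul_rpow (by positivity) (by positivity), ← rpow_natCast, ← rpow_mul hsin,
      ← rpow_natCast, ← rpow_neg hsin]
    norm_num
  simp_rw [show ∀ r φ : ℝ, -(l / √3) * r ^ 2 * sin φ ^ 2 = -(l / √3 * sin φ ^ 2) * r ^ 2 from
    fun r φ ↦ by ring]
  rw [integral_Ioi_intervalIntegral_exp_neg_mul_sq_mul_pow_four (by fun_prop)
      fun φ hφ ↦ by have := sin_pos_of_mem_uIcc_pi_div_three hφ; positivity,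
    intervalIntegral.integral_congr hrpow, intervalIntegral.integral_const_mul,
    integral_inv_sin_pow_five_pi_div_three_two_pi_div_three]
  have hl52 : l ^ (5 / 2 : ℝ) = l * l ^ (3 / 2 : ℝ) := by
    rw [show (5 / 2 : ℝ) = 1 + 3 / 2 by norm_num, rpow_add hl, rpow_one]
  have h352 : √3 ^ (5 / 2 : ℝ) = 3 * √(√3) := by
    rw [show (5 / 2 : ℝ) = 2 + 1 / 2 by norm_num, rpow_add (by positivity), rpow_two,
      sq_sqrt (by norm_num), ← sqrt_eq_rpow]
  rw [rpow_neg (by positivity), div_rpow hl.le (by positivity), hl52, h352, sqrt_mul pi_pos.le]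
  field_simp
  ring
end

section
/- ∫₀¹ ∫₀¹ √(u² + v² − u·v) dv du = 1/3 + (ln 3)/4. -/
/-!
The integrand `√(u² + v² - uv)` is symmetric in `u, v` and positively homogeneous of degree one.
Symmetry (Fubini on the triangle `v ≤ u`) turns the square into twice the triangle, and on the
slice `v ∈ [0, u]` the substitution `v = u t` gives `u² J` with `J = ∫₀¹ √(t² - t + 1) dt`; hence the
integral is `2J/3`. Completing the square, `J = ∫_{-1/2}^{1/2} √(s² + 3/4) ds`, which the primitive
`(s √(s² + c) + c log (s + √(s² + c))) / 2` of `√(s² + c)` evaluates to `1/2 + (3/8) log 3`.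
-/

open Real intervalIntegral MeasureTheory Set Function

theorem intervalIntegral.integral_indicator_Ici {g : ℝ → ℝ} {a b c : ℝ} (hc : c ∈ Icc a b) :
    ∫ x in a..b, indicator (Ici c) g x = ∫ x in c..b, g x := by
  rw [integral_of_le (hc.1.trans hc.2), integral_of_le hc.2,
    MeasureTheory.integral_indicator measurableSet_Ici, Measure.restrict_restrict measurableSet_Ici]
  rcases hc.1.eq_or_lt with rfl | hac
  · rw [inter_eq_right.2 (Ioc_subset_Icc_self.trans Icc_subset_Ici_self)]
  · have hinter : Ici c ∩ Ioc a b = Icc c b := by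
      ext x
      simp only [mem_inter_iff, mem_Ici, mem_Ioc, mem_Icc]
      grind
    rw [hinter, integral_Icc_eq_integral_Ioc]

section Triangle

variable {f : ℝ → ℝ → ℝ} {a b : ℝ}

theorem integral_integral_triangle_swap (hf : Continuous (uncurry f)) (hab : a ≤ b) :
    ∫ u in a..b, ∫ v in a..u, f u v = ∫ v in a..b, ∫ u in v..b, f u v := by
  set F : ℝ → ℝ → ℝ := fun u v => indicator {x | x ≤ u} (f u) v
  have hF : IntegrableOn (uncurry F) (uIoc a b ×ˢ uIoc a b) := by
    have hcont : IntegrableOn (uncurry f) (uIoc a b ×ˢ uIoc a b) :=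
      (hf.continuousOn.integrableOn_compact (isCompact_uIcc.prod isCompact_uIcc)).mono_set
        (prod_mono uIoc_subset_uIcc uIoc_subset_uIcc)
    have hFf : uncurry F = indicator {p : ℝ × ℝ | p.2 ≤ p.1} (uncurry f) := rfl
    exact hFf ▸ hcont.indicator (measurableSet_le measurable_snd measurable_fst)
  calc ∫ u in a..b, ∫ v in a..u, f u v = ∫ u in a..b, ∫ v in a..b, F u v := by
        refine integral_congr fun u hu => (intervalIntegral.integral_indicator ?_).symm
        rwa [uIcc_of_le hab] at hu
    _ = ∫ v in a..b, ∫ u in a..b, F u v := intervalIntegral_intervalIntegral_swap hF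
    _ = ∫ v in a..b, ∫ u in v..b, f u v := by
        refine integral_congr fun v hv => ?_
        rw [uIcc_of_le hab] at hv
        exact integral_indicator_Ici (g := fun u => f u v) hv

theorem integral_square_eq_two_mul_integral_triangle (hf : Continuous (uncurry f))
    (hsymm : ∀ u v, f u v = f v u) (hab : a ≤ b) :
    ∫ u in a..b, ∫ v in a..b, f u v = 2 * ∫ u in a..b, ∫ v in a..u, f u v := by
  have hf_swap : Continuous (uncurry (flip f)) := hf.comp continuous_swap
  have hsplit (v : ℝ) : ∫ u in v..b, f u v = (∫ u in a..b, f u v) - ∫ u in a..v, f u v := by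
    have hcont : Continuous (f · v) := hf.comp (.prodMk_left v)
    rw [integral_interval_sub_left (hcont.intervalIntegrable a b) (hcont.intervalIntegrable a v)]
  have htriangle := integral_integral_triangle_swap hf hab
  simp_rw [hsplit] at htriangle
  have hint_full : IntervalIntegrable (fun v => ∫ u in a..b, f u v) volume a b :=
    (continuous_parametric_intervalIntegral_of_continuous' hf_swap a b).intervalIntegrable a b
  have hint_part : IntervalIntegrable (fun v => ∫ u in a..v, f u v) volume a b :=
    (continuous_parametric_intervalIntegral_of_continuous hf_swap continuous_id).intervalIntegrable
      a b
  rw [integral_sub hint_full hint_part] at htriangle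
  simp_rw [hsymm _ (_ : ℝ)] at htriangle
  -- `htriangle` now reads `T = S - T`, `S` the square and `T` the triangle
  linarith

end Triangle

theorem hasDerivAt_primitive_sqrt_sq_add {c : ℝ} (hc : 0 < c) (s : ℝ) :
    HasDerivAt (fun s => (s * √(s ^ 2 + c) + c * log (s + √(s ^ 2 + c))) / 2) √(s ^ 2 + c) s := by
  have hpos : 0 < s ^ 2 + c := by positivity
  set r := √(s ^ 2 + c) with hr_def
  have hr_pos : 0 < r := sqrt_pos.2 hpos
  have hr_sq : r ^ 2 = s ^ 2 + c := sq_sqrt hpos.le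
  have hs_add_r : 0 < s + r := by nlinarith
  have hr : HasDerivAt (fun s => √(s ^ 2 + c)) (s / r) s := by
    have := ((hasDerivAt_pow 2 s).add_const c).sqrt hpos.ne'
    exact this.congr_deriv (by field_simp; ring)
  have := (((hasDerivAt_id' s).mul hr).add
    ((((hasDerivAt_id' s).add hr).log hs_add_r.ne').const_mul c)).div_const 2
  refine this.congr_deriv ?_
  simp only [Pi.add_apply, ← hr_def]
  field_simp
  linear_combination -(r + s) * hr_sq

theorem integral_sqrt_sq_sub_self_add_one :
    ∫ t in (0:ℝ)..1, √(t ^ 2 - t + 1) = 1 / 2 + 3 / 8 * log 3 := by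
  have hcomplete (t : ℝ) : t ^ 2 - t + 1 = (t - 1 / 2) ^ 2 + 3 / 4 := by ring
  simp_rw [hcomplete]
  rw [intervalIntegral.integral_comp_sub_right (fun s => √(s ^ 2 + 3 / 4)),
    integral_eq_sub_of_hasDerivAt (fun s _ => hasDerivAt_primitive_sqrt_sq_add (by norm_num) s)
      ((by fun_prop : Continuous fun s : ℝ => √(s ^ 2 + 3 / 4)).intervalIntegrable _ _)]
  norm_num [log_div]
  ring

theorem integral_sqrt_sq_add_sq_sub_mul {u : ℝ} (hu : 0 ≤ u) :
    ∫ v in (0:ℝ)..u, √(u ^ 2 + v ^ 2 - u * v) = u ^ 2 * ∫ t in (0:ℝ)..1, √(t ^ 2 - t + 1) := by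
  have hscale (t : ℝ) : √(u ^ 2 + (u * t) ^ 2 - u * (u * t)) = u * √(t ^ 2 - t + 1) := by
    rw [show u ^ 2 + (u * t) ^ 2 - u * (u * t) = u ^ 2 * (t ^ 2 - t + 1) by ring,
      sqrt_mul (sq_nonneg u), sqrt_sq hu]
  calc ∫ v in (0:ℝ)..u, √(u ^ 2 + v ^ 2 - u * v)
      = u * ∫ t in (0:ℝ)..1, √(u ^ 2 + (u * t) ^ 2 - u * (u * t)) := by
        rw [mul_integral_comp_mul_left (f := fun v => √(u ^ 2 + v ^ 2 - u * v)), mul_zero, mul_one]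
    _ = u ^ 2 * ∫ t in (0:ℝ)..1, √(t ^ 2 - t + 1) := by
        simp_rw [hscale, intervalIntegral.integral_const_mul]
        ring

theorem stmt_10 :
    ∫ u in (0:ℝ)..1, ∫ v in (0:ℝ)..1, Real.sqrt (u^2 + v^2 - u*v)
      = 1/3 + Real.log 3 / 4 := by
  have h01 : (0:ℝ) ≤ 1 := zero_le_one
  rw [integral_square_eq_two_mul_integral_triangle (by fun_prop) (fun u v => by ring_nf) h01,
    integral_congr fun u hu => integral_sqrt_sq_add_sq_sub_mul (uIcc_of_le h01 ▸ hu).1,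
    intervalIntegral.integral_mul_const, integral_pow, integral_sqrt_sq_sub_self_add_one]
  ring
end
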